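/- For any program P, if 𝒞 is a pairwise-incompatible set of constraint databases, then ⋃_{D ∈ 𝒞} T_P(D) is also pairwise incompatible: if E₁ ∈ T_P(D₁) and E₂ ∈ T_P(D₂) for D₁, D₂ ∈ 𝒞 and E₁ is compatible with E₂, then E₁ = E₂. -/

import Mathlib

open scoped Classical

namespace FCLP

/-! ### Terms -/

/-- Ground (Herbrand) terms: uninterpreted function symbols applied to ground terms. -/
inductive GTerm : Type where
  | func : ℕ → List GTerm → GTerm

/-- Terms possibly containing variables. -/
inductive VTerm : Type where
  | var : ℕ → VTerm
  | func : ℕ → List VTerm → VTerm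

/-- A substitution is a total map from variables to ground terms. -/
abbrev Subst := ℕ → GTerm

mutual
  /-- Applying a substitution to a term. -/
  def VTerm.subst (σ : Subst) : VTerm → GTerm
    | .var x => σ x
    | .func f args => .func f (VTerm.substList σ args)
  def VTerm.substList (σ : Subst) : List VTerm → List GTerm
    | [] => []
    | t :: ts => VTerm.subst σ t :: VTerm.substList σ ts
end

/-- The variable `x` occurs in the term. -/
inductive VTerm.HasVar : VTerm → ℕ → Prop where
  | var (x : ℕ) : VTerm.HasVar (.var x) x
  | func {f : ℕ} {args : List VTerm} {t : VTerm} {x : ℕ} :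
      t ∈ args → VTerm.HasVar t x → VTerm.HasVar (.func f args) x

/-! ### Attributes, facts, rules, programs -/

/-- An attribute `p(t₁,...,tₙ)`: a predicate applied to ground terms. -/
structure Attr where
  pred : ℕ
  args : List GTerm

/-- A fact `p(t̄) is v`. -/
structure Fact where
  attr : Attr
  value : GTerm

/-- A premise `p(t̄) is v`, possibly containing variables. -/
structure VAtom where
  pred : ℕ
  args : List VTerm
  value : VTerm

def VAtom.subst (σ : Subst) (A : VAtom) : Fact :=
  ⟨⟨A.pred, A.args.map (VTerm.subst σ)⟩, A.value.subst σ⟩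

def VAtom.HasVar (A : VAtom) (x : ℕ) : Prop :=
  (∃ t ∈ A.args, t.HasVar x) ∨ A.value.HasVar x

/-- A rule head: open `p(t̄) is? v` or closed `p(t̄) is {v₁,...,vₘ}`. -/
inductive Head : Type where
  | opn : ℕ → List VTerm → VTerm → Head
  | closed : ℕ → List VTerm → List VTerm → Head

def Head.HasVar : Head → ℕ → Prop
  | .opn _ args v, x => (∃ t ∈ args, t.HasVar x) ∨ v.HasVar x
  | .closed _ args vs, x => (∃ t ∈ args, t.HasVar x) ∨ ∃ v ∈ vs, v.HasVar x

/-- The ground attribute of a rule head under a substitution. -/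
def Head.groundAttr (σ : Subst) : Head → Attr
  | .opn p args _ => ⟨p, args.map (VTerm.subst σ)⟩
  | .closed p args _ => ⟨p, args.map (VTerm.subst σ)⟩

/-- A rule `H ← F` with a finite collection of premises. -/
structure Rule where
  head : Head
  prems : List VAtom

/-- Wellformedness: closed heads offer at least one value, and every
variable in the head occurs in a premise. -/
def Rule.WF (r : Rule) : Prop :=
  (∀ x, r.head.HasVar x → ∃ A ∈ r.prems, A.HasVar x) ∧
  (∀ p args vs, r.head = .closed p args vs → vs ≠ [])

/-- A program is a set of rules. -/
abbrev Program := Set Rule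

/-- A program is a *finite* set of *wellformed* rules. -/
def Program.WFP (P : Program) : Prop := P.Finite ∧ ∀ r ∈ P, r.WF

/-! ### Fact-set semantics -/

/-- A set of facts is consistent when each attribute has at most one value. -/
def Consistent (D : Set Fact) : Prop :=
  ∀ f ∈ D, ∀ g ∈ D, f.attr = g.attr → f = g

/-- `σ` satisfies the premises `F` in the fact-set database `D`. -/
def satF (σ : Subst) (F : List VAtom) (D : Set Fact) : Prop :=
  ∀ A ∈ F, A.subst σ ∈ D

/-- Fact-set evolution `D →_P S`. -/
inductive Evolve (P : Program) : Set Fact → Set (Set Fact) → Prop where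
  | triv (D : Set Fact) : Evolve P D {D}
  | closed {D : Set Fact} {r : Rule} {p : ℕ} {args vs : List VTerm} {σ : Subst} :
      r ∈ P → r.head = .closed p args vs → satF σ r.prems D →
      Evolve P D
        { E | ∃ v ∈ vs,
            E = insert (⟨⟨p, args.map (VTerm.subst σ)⟩, VTerm.subst σ v⟩ : Fact) D ∧
            Consistent E }
  | opn {D : Set Fact} {r : Rule} {p : ℕ} {args : List VTerm} {v : VTerm} {σ : Subst} :
      r ∈ P → r.head = .opn p args v → satF σ r.prems D →
      Evolve P D
        ({D} ∪ { E | E = insert (⟨⟨p, args.map (VTerm.subst σ)⟩, VTerm.subst σ v⟩ : Fact) D ∧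
                     Consistent E })

/-- `P` allows `D` to step to `D'`. -/
def Step (P : Program) (D D' : Set Fact) : Prop := ∃ S, Evolve P D S ∧ D' ∈ S

/-- A database is saturated when its only evolution is the singleton of itself. -/
def Saturated (P : Program) (D : Set Fact) : Prop := ∀ S, Evolve P D S → S = {D}

/-- A solution: a saturated database reachable from `∅` by a (finite) step sequence. -/
def Solution (P : Program) (D : Set Fact) : Prop :=
  Relation.ReflTransGen (Step P) ∅ D ∧ Saturated P D

/-! ### Constraints and constraint databases -/

/-- A constraint: `just t` or `noneOf X`. -/
inductive Constraint : Type where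
  | just : GTerm → Constraint
  | noneOf : Set GTerm → Constraint

/-- The order on constraints. -/
def Constraint.le : Constraint → Constraint → Prop
  | .noneOf X, .noneOf Y => X ⊆ Y
  | .noneOf X, .just t => t ∉ X
  | .just t, .just t' => t = t'
  | .just _, .noneOf _ => False

instance : LE Constraint := ⟨Constraint.le⟩

/-- Least upper bound of a (compatible) set of constraints: if some `just t` is present
it is the lub; otherwise it is `noneOf` of the union. -/
noncomputable def Constraint.lub (C : Set Constraint) : Constraint :=
  if h : ∃ t, Constraint.just t ∈ C then .just h.choose
  else .noneOf (⋃₀ { X | Constraint.noneOf X ∈ C })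

/-- A constraint database: a map from ground attributes to constraints,
ordered pointwise (via the `Pi` order). -/
abbrev CDB := Attr → Constraint

/-- The least constraint database: every attribute maps to `noneOf ∅`. -/
def cdbBot : CDB := fun _ => .noneOf ∅

/-- Pointwise least upper bound of a (compatible) set of constraint databases. -/
noncomputable def CDB.lub (S : Set CDB) : CDB :=
  fun a => Constraint.lub ((fun Δ => Δ a) '' S)

/-- A subset of a poset is compatible when it has an upper bound. -/
def Compatible {α : Type*} [LE α] (X : Set α) : Prop := ∃ y, ∀ x ∈ X, x ≤ y

/-- Binary compatibility. -/
def Compat {α : Type*} [LE α] (x y : α) : Prop := Compatible ({x, y} : Set α)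

/-- A choice set: a pairwise-incompatible set of constraint databases. -/
def IsChoiceSet (𝒞 : Set CDB) : Prop :=
  ∀ D ∈ 𝒞, ∀ E ∈ 𝒞, Compat D E → D = E

/-- The order on choice sets. -/
def ChoiceLE (𝒞₁ 𝒞₂ : Set CDB) : Prop :=
  ∀ D₂ ∈ 𝒞₂, ∃ D₁ ∈ 𝒞₁, D₁ ≤ D₂

/-- Least upper bound of an indexed family of choice sets:
`⋁ᵢ 𝒞ᵢ = { ⋁ Im(f) : f ∈ ∏ᵢ 𝒞ᵢ, Im(f) compatible }`. -/
noncomputable def ChoiceJoin {I : Type*} (𝒞 : I → Set CDB) : Set CDB :=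
  { E | ∃ f : I → CDB, (∀ i, f i ∈ 𝒞 i) ∧ Compatible (Set.range f) ∧
        E = CDB.lub (Set.range f) }

/-- Least upper bound of a set of choice sets. -/
noncomputable def ChoiceSJoin (S : Set (Set CDB)) : Set CDB :=
  ChoiceJoin (fun C : S => (C : Set CDB))

/-- Greatest lower bound of a set of choice sets:
`⋀ X = ⋁ {𝒞 : ∀ x ∈ X, 𝒞 ≤ x}` (join over choice-set lower bounds). -/
noncomputable def ChoiceMeet (S : Set (Set CDB)) : Set CDB :=
  ChoiceSJoin { C | IsChoiceSet C ∧ ∀ X ∈ S, ChoiceLE C X }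

/-! ### Immediate consequence -/

/-- `σ` satisfies `F` in the constraint database `Δ`. -/
def satC (σ : Subst) (F : List VAtom) (Δ : CDB) : Prop :=
  ∀ A ∈ F, Constraint.just (A.value.subst σ) ≤ Δ ⟨A.pred, A.args.map (VTerm.subst σ)⟩

/-- The constraint database mapping `a` to `c` and every other attribute to `noneOf ∅`. -/
noncomputable def unitCDB (a : Attr) (c : Constraint) : CDB :=
  fun a' => if a' = a then c else .noneOf ∅

/-- The choice set `⟨σH⟩` determined by a ground rule head. -/
noncomputable def headChoice (σ : Subst) : Head → Set CDB
  | .opn p args v =>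
      { unitCDB ⟨p, args.map (VTerm.subst σ)⟩ (.just (v.subst σ)),
        unitCDB ⟨p, args.map (VTerm.subst σ)⟩ (.noneOf {v.subst σ}) }
  | .closed p args vs =>
      { Δ | ∃ v ∈ vs, Δ = unitCDB ⟨p, args.map (VTerm.subst σ)⟩ (.just (v.subst σ)) }

/-- The immediate consequence operator
`T_P(Δ) = {Δ} ∨ ⋁{ ⟨σH⟩ : (H ← F) ∈ P, σ satisfies F in Δ }`. -/
noncomputable def TP (P : Program) (Δ : CDB) : Set CDB :=
  ChoiceSJoin
    (insert {Δ} { C | ∃ r ∈ P, ∃ σ : Subst, satC σ r.prems Δ ∧ C = headChoice σ r.head })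

/-- The attribute-specific immediate consequence operator `T_{P[a]}`. -/
noncomputable def TPa (P : Program) (a : Attr) (Δ : CDB) : Set CDB :=
  ChoiceSJoin
    { C | ∃ r ∈ P, ∃ σ : Subst, satC σ r.prems Δ ∧ r.head.groundAttr σ = a ∧
          C = headChoice σ r.head }

/-- The lifted immediate consequence operator `T_P*(𝒞) = ⋃_{Δ ∈ 𝒞} T_P(Δ)`. -/
noncomputable def TPs (P : Program) (𝒞 : Set CDB) : Set CDB :=
  { E | ∃ Δ ∈ 𝒞, E ∈ TP P Δ }

/-- The least fixed point of `T_P*`, defined à la Knaster–Tarski as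
`⋀ {𝒞 : T_P*(𝒞) ≤ 𝒞}`. -/
noncomputable def lfpTPs (P : Program) : Set CDB :=
  ChoiceMeet { C | IsChoiceSet C ∧ ChoiceLE (TPs P C) C }

/-! ### Positive and finite constraint databases, promotion and erasure -/

/-- A constraint database is positive when `noneOf X` only occurs with `X = ∅`. -/
def CDBPositive (Δ : CDB) : Prop := ∀ a X, Δ a = .noneOf X → X = ∅

/-- A constraint database is finite. -/
def CDBFinite (Δ : CDB) : Prop :=
  { a | Δ a ≠ .noneOf ∅ }.Finite ∧ ∀ a X, Δ a = .noneOf X → X.Finite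

/-- Promotion of a (consistent) fact set to a constraint database. -/
noncomputable def promote (D : Set Fact) : CDB :=
  fun a => if h : ∃ v, (⟨a, v⟩ : Fact) ∈ D then .just h.choose else .noneOf ∅

/-- Erasure of a constraint database to a fact set. -/
def eraseCDB (Δ : CDB) : Set Fact := { f | Δ f.attr = .just f.value }

/-! ### The abstract algorithm -/

/-- `P` allows `Δ` to take an algorithmic step to any `Δ' ∈ {Δ} ∨ T_{P[a]}(Δ)`
for some attribute `a`, provided `T_P(Δ) ≠ ∅`. -/
noncomputable def AlgStep (P : Program) (Δ Δ' : CDB) : Prop :=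
  TP P Δ ≠ ∅ ∧ ∃ a : Attr, Δ' ∈ ChoiceSJoin {({Δ} : Set CDB), TPa P a Δ}

/-! ### Datalog -/

/-- A datalog atom, possibly with variables. -/
structure DAtom where
  pred : ℕ
  args : List VTerm

/-- A ground datalog atom. -/
structure GAtom where
  pred : ℕ
  args : List GTerm

def DAtom.subst (σ : Subst) (A : DAtom) : GAtom := ⟨A.pred, A.args.map (VTerm.subst σ)⟩

/-- A datalog rule `p(t̄) ← p₁(t̄₁), ..., pₙ(t̄ₙ)`. -/
structure DRule where
  head : DAtom
  prems : List DAtom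

/-- Every variable of the head appears in a premise. -/
def DRule.WF (r : DRule) : Prop :=
  ∀ x, (∃ t ∈ r.head.args, t.HasVar x) → ∃ A ∈ r.prems, ∃ t ∈ A.args, t.HasVar x

/-- The datalog immediate consequence operator. -/
def dImmCons (P : Set DRule) (X : Set GAtom) : Set GAtom :=
  { g | ∃ r ∈ P, ∃ σ : Subst, (∀ A ∈ r.prems, A.subst σ ∈ X) ∧ g = r.head.subst σ }

/-- The least model of a datalog program: the least fixed point of `dImmCons`. -/
def dModel (P : Set DRule) : Set GAtom := ⋂₀ { X | dImmCons P X ⊆ X }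

/-- Translation of a datalog program to a finite-choice logic program, using the
constant with (fresh) function symbol `u` as the value `unit`. -/
def trDatalog (u : ℕ) (P : Set DRule) : Program :=
  { r | ∃ dr ∈ P,
      r = ⟨Head.closed dr.head.pred dr.head.args [VTerm.func u []],
           dr.prems.map (fun A => ⟨A.pred, A.args, VTerm.func u []⟩)⟩ }

/-! ### Answer set programming -/

/-- A ground ASP rule `p ← p₁,...,pₙ, ¬q₁,...,¬qₘ` over propositional atoms. -/
structure ASPRule where
  head : ℕ
  pos : List ℕ
  neg : List ℕ

/-- One step of the immediate consequence operator of the reduct `P^X`. -/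
def reductCons (P : Set ASPRule) (X : Set ℕ) (Y : Set ℕ) : Set ℕ :=
  { p | ∃ r ∈ P, r.head = p ∧ (∀ q ∈ r.pos, q ∈ Y) ∧ (∀ q ∈ r.neg, q ∉ X) }

/-- The least model of the reduct `P^X`. -/
def reductModel (P : Set ASPRule) (X : Set ℕ) : Set ℕ :=
  ⋂₀ { Y | reductCons P X Y ⊆ Y }

/-- `X` is a stable model of `P` when the least model of the reduct `P^X` equals `X`. -/
def StableModel (P : Set ASPRule) (X : Set ℕ) : Prop := reductModel P X = X

/-- The fresh constant `tt` (as a ground term). -/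
def ttT : GTerm := .func 0 []
/-- The fresh constant `ff` (as a ground term). -/
def ffT : GTerm := .func 1 []
/-- The constant `tt` as a (closed) term of the rule language. -/
def ttV : VTerm := .func 0 []
/-- The constant `ff` as a (closed) term of the rule language. -/
def ffV : VTerm := .func 1 []

/-- The premise `p is tt`. -/
def posPrem (p : ℕ) : VAtom := ⟨p, [], ttV⟩
/-- The premise `q is ff`. -/
def negPrem (q : ℕ) : VAtom := ⟨q, [], ffV⟩

/-- Translation of an ASP program to a finite-choice logic program: each rule
`p ← p₁,...,pₙ, ¬q₁,...,¬qₘ` becomes `m` open rules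
`qⱼ is? ff ← p₁ is tt,...,pₙ is tt, q₁ is ff,...,q_{j-1} is ff` and one closed rule
`p is {tt} ← p₁ is tt,...,pₙ is tt, q₁ is ff,...,qₘ is ff`. -/
def trASP (P : Set ASPRule) : Program :=
  { r | ∃ ar ∈ P,
      (∃ j : Fin ar.neg.length,
        r = ⟨Head.opn (ar.neg.get j) [] ffV,
             ar.pos.map posPrem ++ (ar.neg.take j.val).map negPrem⟩) ∨
      r = ⟨Head.closed ar.head [] [ttV],
           ar.pos.map posPrem ++ ar.neg.map negPrem⟩ }

/-!
Every element of `T_P(D)` lies above `D`, so compatible `E₁ ∈ T_P(D₁)`, `E₂ ∈ T_P(D₂)` make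
`D₁` and `D₂` compatible, hence equal. It remains that `T_P(D)` is itself a choice set: it is
a join of choice sets (`{D}` and the `⟨σH⟩`), and two compatible elements of a join come from
selections that are compatible componentwise, hence equal.
-/

theorem Constraint.le_trans {a b c : Constraint} (hab : a ≤ b) (hbc : b ≤ c) : a ≤ c := by
  cases a <;> cases b <;> cases c <;>
    simp only [LE.le, Constraint.le] at hab hbc ⊢
  · exact hab ▸ hbc
  · exact hbc ▸ hab
  · exact fun ht => hbc (hab ht)
  · exact Set.Subset.trans hab hbc

theorem CDB.le_trans {Δ₁ Δ₂ Δ₃ : CDB} (h₁₂ : Δ₁ ≤ Δ₂) (h₂₃ : Δ₂ ≤ Δ₃) : Δ₁ ≤ Δ₃ :=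
  fun a => Constraint.le_trans (h₁₂ a) (h₂₃ a)

-- An upper bound of a set containing `just t` must be `just t`, so the choice made by
-- `Constraint.lub` is forced.
theorem Constraint.le_lub {C : Set Constraint} (hC : Compatible C) {c : Constraint}
    (hc : c ∈ C) : c ≤ Constraint.lub C := by
  obtain ⟨u, hu⟩ := hC
  unfold Constraint.lub
  split_ifs with h
  · have hchoose : Constraint.just h.choose ≤ u := hu _ h.choose_spec
    cases u with
    | noneOf X => exact hchoose.elim
    | just s =>
      have hs : h.choose = s := hchoose
      rw [hs]
      exact hu c hc
  · cases c with
    | just t => exact absurd ⟨t, hc⟩ h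
    | noneOf X => exact Set.subset_sUnion_of_mem hc

theorem CDB.le_lub {S : Set CDB} (hS : Compatible S) {Δ : CDB} (hΔ : Δ ∈ S) :
    Δ ≤ CDB.lub S := by
  obtain ⟨u, hu⟩ := hS
  intro a
  refine Constraint.le_lub ⟨u a, ?_⟩ ⟨Δ, hΔ, rfl⟩
  rintro _ ⟨Δ', hΔ', rfl⟩
  exact hu Δ' hΔ' a

theorem compat_iff_exists_le {α : Type*} [LE α] {x y : α} :
    Compat x y ↔ ∃ z, x ≤ z ∧ y ≤ z := by
  simp only [Compat, Compatible, Set.forall_mem_insert, Set.mem_singleton_iff, forall_eq]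

theorem Compat.symm {α : Type*} [LE α] {x y : α} (h : Compat x y) : Compat y x := by
  obtain ⟨z, hx, hy⟩ := compat_iff_exists_le.mp h
  exact compat_iff_exists_le.mpr ⟨z, hy, hx⟩

theorem Compat.of_le {Δ₁ Δ₂ Δ₁' Δ₂' : CDB} (h : Compat Δ₁' Δ₂') (h₁ : Δ₁ ≤ Δ₁')
    (h₂ : Δ₂ ≤ Δ₂') : Compat Δ₁ Δ₂ := by
  obtain ⟨u, hu₁, hu₂⟩ := compat_iff_exists_le.mp h
  exact compat_iff_exists_le.mpr ⟨u, CDB.le_trans h₁ hu₁, CDB.le_trans h₂ hu₂⟩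

theorem choiceLE_choiceJoin {I : Type*} (𝒞 : I → Set CDB) (i : I) :
    ChoiceLE (𝒞 i) (ChoiceJoin 𝒞) := by
  rintro _ ⟨f, hf, hcompat, rfl⟩
  exact ⟨f i, hf i, CDB.le_lub hcompat ⟨i, rfl⟩⟩

theorem IsChoiceSet.choiceJoin {I : Type*} {𝒞 : I → Set CDB} (h𝒞 : ∀ i, IsChoiceSet (𝒞 i)) :
    IsChoiceSet (ChoiceJoin 𝒞) := by
  rintro _ ⟨f₁, hf₁, hcompat₁, rfl⟩ _ ⟨f₂, hf₂, hcompat₂, rfl⟩ hcompat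
  suffices f₁ = f₂ by rw [this]
  funext i
  exact h𝒞 i _ (hf₁ i) _ (hf₂ i)
    (hcompat.of_le (CDB.le_lub hcompat₁ ⟨i, rfl⟩) (CDB.le_lub hcompat₂ ⟨i, rfl⟩))

theorem isChoiceSet_singleton (Δ : CDB) : IsChoiceSet {Δ} := by
  rintro _ rfl _ rfl _
  rfl

theorem Compat.of_unitCDB {a : Attr} {c c' : Constraint}
    (h : Compat (unitCDB a c) (unitCDB a c')) : Compat c c' := by
  obtain ⟨u, hu, hu'⟩ := compat_iff_exists_le.mp h
  refine compat_iff_exists_le.mpr ⟨u a, ?_, ?_⟩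
  · simpa [unitCDB] using hu a
  · simpa [unitCDB] using hu' a

theorem Constraint.eq_of_compat_just {t t' : GTerm}
    (h : Compat (Constraint.just t) (Constraint.just t')) : t = t' := by
  obtain ⟨u, hu, hu'⟩ := compat_iff_exists_le.mp h
  cases u with
  | just s => exact Eq.trans (hu : t = s) (hu' : t' = s).symm
  | noneOf X => exact hu.elim

theorem Constraint.not_compat_just_noneOf (t : GTerm) :
    ¬ Compat (Constraint.just t) (Constraint.noneOf {t}) := by
  intro h
  obtain ⟨u, hu, hu'⟩ := compat_iff_exists_le.mp h
  cases u with
  | just s => exact (hu' : s ∉ ({t} : Set GTerm)) (hu : t = s).symm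
  | noneOf X => exact hu.elim

theorem isChoiceSet_headChoice (σ : Subst) (H : Head) : IsChoiceSet (headChoice σ H) := by
  cases H with
  | opn p args v =>
    rintro D (rfl | rfl) E (rfl | rfl) h
    · rfl
    · exact (Constraint.not_compat_just_noneOf _ (Compat.of_unitCDB h)).elim
    · exact (Constraint.not_compat_just_noneOf _ (Compat.of_unitCDB h).symm).elim
    · rfl
  | closed p args vs =>
    rintro _ ⟨v, -, rfl⟩ _ ⟨w, -, rfl⟩ h
    rw [Constraint.eq_of_compat_just (Compat.of_unitCDB h)]

theorem isChoiceSet_TP (P : Program) (Δ : CDB) : IsChoiceSet (TP P Δ) := by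
  refine IsChoiceSet.choiceJoin ?_
  rintro ⟨C, rfl | ⟨r, -, σ, -, rfl⟩⟩
  · exact isChoiceSet_singleton Δ
  · exact isChoiceSet_headChoice σ r.head

theorem le_of_mem_TP {P : Program} {Δ E : CDB} (hE : E ∈ TP P Δ) : Δ ≤ E := by
  obtain ⟨_, rfl, hΔE⟩ := choiceLE_choiceJoin _ ⟨{Δ}, Set.mem_insert _ _⟩ E hE
  exact hΔE

/-- If `𝒞` is pairwise incompatible then so is `⋃_{D ∈ 𝒞} T_P(D)`: compatible
elements `E₁ ∈ T_P(D₁)`, `E₂ ∈ T_P(D₂)` with `D₁, D₂ ∈ 𝒞` are equal. -/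
theorem TPs_pairwise_incompatible (P : Program) (hP : Program.WFP P)
    (𝒞 : Set CDB) (h𝒞 : IsChoiceSet 𝒞) :
    ∀ D₁ ∈ 𝒞, ∀ D₂ ∈ 𝒞, ∀ E₁ ∈ TP P D₁, ∀ E₂ ∈ TP P D₂,
      Compat E₁ E₂ → E₁ = E₂ := by
  intro D₁ hD₁ D₂ hD₂ E₁ hE₁ E₂ hE₂ hcompat
  obtain rfl : D₁ = D₂ :=
    h𝒞 D₁ hD₁ D₂ hD₂ (hcompat.of_le (le_of_mem_TP hE₁) (le_of_mem_TP hE₂))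
  exact isChoiceSet_TP P D₁ E₁ hE₁ E₂ hE₂ hcompat

end FCLP
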